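/- arXiv:2209.13662 — 2 statements merged into one kernel-verified Lean document; each statement's English description precedes it below -/
import Mathlib

section
/- Let k be a field of characteristic zero, K a field which is a commutative k-algebra, and D : Derivation k K K a nonzero derivation. Then K satisfies no nontrivial differential identity: for every n ≥ 1 and every nonzero f ∈ MvPolynomial (Fin n × ℕ) k there exists v : Fin n → K such that the evaluation of f at v (sending X (i, j) to D^[j] (v i)) is nonzero. -/
/-!
Choose `t` with `D t ≠ 0`; only derivatives of order `< N` occur in `f`. For
`v i = ∑ r, c (i, r) • t ^ r` with constants `c (i, r) ∈ k`, the `j`-th derivative of `v i` is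
`∑ r, W j r * c (i, r)` with `W j r = Dʲ (t ^ r)`. By Faà di Bruno, `W` is a lower-triangular
matrix with diagonal `(D t)ʲ` times an upper-triangular one with diagonal `r!`, so `W` is
invertible in characteristic zero. Hence `f` composed with the linear substitution `W` is a
nonzero polynomial over `K`, and as `k` is infinite it does not vanish at some `k`-point `c`.
-/

open MvPolynomial Finset

/-- Evaluation of a differential polynomial `f ∈ MvPolynomial (Fin n × ℕ) k`
(the variable `X (i, j)` stands for the `j`-th derivative of the `i`-th generator)
in a commutative associative `k`-algebra `A` with derivation `D` at `v : Fin n → A`. -/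
noncomputable def diffEval {k : Type} [Field k] {A : Type} [CommRing A] [Algebra k A]
    (D : Derivation k A A) {n : ℕ} (v : Fin n → A) (f : MvPolynomial (Fin n × ℕ) k) : A :=
  MvPolynomial.aeval (fun p : Fin n × ℕ => (⇑D)^[p.2] (v p.1)) f

section IterateDerivation

variable {R A : Type*} [CommSemiring R] [CommSemiring A] [Algebra R A]
  (D : Derivation R A A) (t : A)

theorem iterate_derivation_sum_smul {ι : Type*} (s : Finset ι) (c : ι → R) (u : ι → A) (j : ℕ) :
    (⇑D)^[j] (∑ i ∈ s, c i • u i) = ∑ i ∈ s, c i • (⇑D)^[j] (u i) := by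
  rw [show (⇑D)^[j] = ⇑((D : Module.End R A) ^ j) from (Module.End.coe_pow _ j).symm]
  simp only [map_sum, map_smul]

/-- The partial Bell polynomial `B_{s,m}(D t, D² t, …)`, i.e. the coefficient of `p⁽ᵐ⁾(t)` in
Faà di Bruno's expansion of `Dˢ (p t)`. -/
def partialBell : ℕ → ℕ → A
  | 0, 0 => 1
  | 0, _ + 1 => 0
  | s + 1, 0 => D (partialBell s 0)
  | s + 1, m + 1 => D (partialBell s (m + 1)) + D t * partialBell s m

theorem partialBell_eq_zero_of_lt {s m : ℕ} (h : s < m) : partialBell D t s m = 0 := by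
  induction s generalizing m with
  | zero => obtain ⟨m, rfl⟩ := Nat.exists_eq_add_of_lt h; rfl
  | succ s ih =>
    obtain ⟨m, rfl⟩ : ∃ m', m = m' + 1 := Nat.exists_eq_succ_of_ne_zero (by omega)
    simp only [partialBell, ih (by omega : s < m + 1), ih (by omega : s < m), map_zero, mul_zero,
      add_zero]

theorem partialBell_self (s : ℕ) : partialBell D t s s = D t ^ s := by
  induction s with
  | zero => rw [pow_zero]; rfl
  | succ s ih =>
    rw [partialBell, partialBell_eq_zero_of_lt D t (Nat.lt_succ_self s), ih, map_zero, zero_add,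
      pow_succ']

theorem derivation_descFactorial_mul_pow (r m : ℕ) :
    D ((r.descFactorial m : A) * t ^ (r - m)) =
      D t * ((r.descFactorial (m + 1) : A) * t ^ (r - (m + 1))) := by
  rw [Derivation.leibniz, D.leibniz_pow, D.map_natCast, smul_zero, add_zero, Nat.descFactorial_succ,
    Nat.sub_sub]
  simp only [smul_eq_mul, nsmul_eq_mul, Nat.cast_mul]
  ring

theorem iterate_derivation_pow (r s : ℕ) : (⇑D)^[s] (t ^ r) =
    ∑ m ∈ range (s + 1), partialBell D t s m * ((r.descFactorial m : A) * t ^ (r - m)) := by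
  induction s with
  | zero => simp [partialBell]
  | succ s ih =>
    set V : ℕ → A := fun m => (r.descFactorial m : A) * t ^ (r - m)
    set B := partialBell D t
    have hterm (m : ℕ) : D (B s m * V m) = D (B s m) * V m + D t * B s m * V (m + 1) := by
      rw [Derivation.leibniz, derivation_descFactorial_mul_pow, smul_eq_mul, smul_eq_mul]
      ring
    have hsucc (m : ℕ) : B (s + 1) (m + 1) * V (m + 1) =
        D (B s (m + 1)) * V (m + 1) + D t * B s m * V (m + 1) := add_mul _ _ _
    rw [Function.iterate_succ_apply', ih, map_sum]
    change ∑ m ∈ range (s + 1), D (B s m * V m) = ∑ m ∈ range (s + 2), B (s + 1) m * V m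
    rw [sum_range_succ' _ (s + 1), sum_congr rfl fun m _ => hsucc m]
    simp only [hterm, sum_add_distrib]
    rw [sum_range_succ' (fun m => D (B s m) * V m),
      sum_range_succ (fun m => D (B s (m + 1)) * V (m + 1)),
      show B s (s + 1) = 0 from partialBell_eq_zero_of_lt D t (Nat.lt_succ_self s),
      show B (s + 1) 0 = D (B s 0) from rfl, map_zero, zero_mul, add_zero]
    ring

end IterateDerivation

section Wronskian

variable {R A : Type*} [CommSemiring R] [CommRing A] [Algebra R A] (D : Derivation R A A) (t : A)

theorem iterate_derivation_pow_matrix_eq_mul (N : ℕ) :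
    Matrix.of (fun j r : Fin N => (⇑D)^[j] (t ^ (r : ℕ))) =
      Matrix.of (fun j m : Fin N => partialBell D t j m) *
        Matrix.of (fun m r : Fin N => ((r : ℕ).descFactorial m : A) * t ^ ((r : ℕ) - m)) := by
  ext j r
  simp only [Matrix.of_apply, Matrix.mul_apply]
  rw [iterate_derivation_pow, Fin.sum_univ_eq_sum_range
    (fun m => partialBell D t j m * (((r : ℕ).descFactorial m : A) * t ^ ((r : ℕ) - m)))]
  refine sum_subset (range_subset_range.mpr j.isLt) fun m _ hm => ?_
  rw [partialBell_eq_zero_of_lt D t (by simpa using hm), zero_mul]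

theorem det_iterate_derivation_pow (N : ℕ) :
    (Matrix.of fun j r : Fin N => (⇑D)^[j] (t ^ (r : ℕ))).det =
      ∏ j : Fin N, D t ^ (j : ℕ) * ((j : ℕ).factorial : A) := by
  rw [iterate_derivation_pow_matrix_eq_mul, Matrix.det_mul, prod_mul_distrib,
    Matrix.det_of_isLowerTriangular, Matrix.det_of_isUpperTriangular]
  · simp [partialBell_self, Nat.descFactorial_self]
  · intro m r (hrm : r < m)
    simp [Nat.descFactorial_eq_zero_iff_lt.mpr hrm]
  · intro j m (hjm : j < m)
    exact partialBell_eq_zero_of_lt D t hjm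

end Wronskian

open Matrix

section Specialization

variable {k K σ : Type*} [Field k] [Field K] [Algebra k K]

theorem exists_eval_algebraMap_ne_zero [Infinite k] {p : MvPolynomial σ K} (hp : p ≠ 0) :
    ∃ c : σ → k, eval (fun i => algebraMap k K (c i)) p ≠ 0 := by
  by_contra! h
  refine hp (funext_set (fun _ => Set.range (algebraMap k K))
    (fun _ => Set.infinite_range_of_injective (algebraMap k K).injective) fun x hx => ?_)
  choose c hc using Set.mem_univ_pi.mp hx
  simpa [← funext hc] using h c

theorem eval_aeval_eq_aeval {τ : Type*} (g : τ → MvPolynomial σ K) (x : σ → K)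
    (f : MvPolynomial τ k) : eval x (aeval g f) = aeval (fun i => eval x (g i)) f :=
  AlgHom.congr_fun (comp_aeval g ((aeval x).restrictScalars k)) f

theorem exists_aeval_mulVec_ne_zero [Infinite k] {ι : Type*} [Fintype ι] [DecidableEq ι]
    {W : Matrix ι ι K} (hW : W.det ≠ 0) {f : MvPolynomial (σ × ι) k} (hf : f ≠ 0) :
    ∃ c : σ × ι → k, aeval (fun p => (W *ᵥ fun r => algebraMap k K (c (p.1, r))) p.2) f ≠ 0 := by
  have : Infinite K := Infinite.of_injective _ (algebraMap k K).injective
  obtain ⟨y, hy⟩ : ∃ y : σ × ι → K, aeval y f ≠ 0 := by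
    by_contra! h
    refine hf (map_injective _ (algebraMap k K).injective (funext fun y => ?_))
    rw [eval_map, ← aeval_def, map_zero]
    exact h y
  set G : MvPolynomial (σ × ι) K := aeval (fun p => ∑ r, C (W p.2 r) * X (p.1, r)) f
  have hG (x : σ × ι → K) : eval x G = aeval (fun p => (W *ᵥ fun r => x (p.1, r)) p.2) f := by
    simp only [G, eval_aeval_eq_aeval, map_sum, map_mul, eval_C, eval_X, mulVec, dotProduct]
  have hG0 : G ≠ 0 := by
    intro h0
    have hWy (i : σ) : (W *ᵥ W⁻¹ *ᵥ fun j => y (i, j)) = fun j => y (i, j) := by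
      rw [mulVec_mulVec, mul_nonsing_inv _ hW.isUnit, one_mulVec]
    have := hG fun p => (W⁻¹ *ᵥ fun j => y (p.1, j)) p.2
    simp only [hWy, h0, map_zero] at this
    exact hy this.symm
  obtain ⟨c, hc⟩ := exists_eval_algebraMap_ne_zero (k := k) hG0
  exact ⟨c, by simpa only [hG] using hc⟩

end Specialization

theorem exists_rename_prodMap_fin_val {R σ : Type*} [CommSemiring R]
    (f : MvPolynomial (σ × ℕ) R) :
    ∃ (N : ℕ) (g : MvPolynomial (σ × Fin N) R), rename (Prod.map id Fin.val) g = f := by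
  refine ⟨f.vars.sup Prod.snd + 1, exists_rename_eq_of_vars_subset_range f _
    (Function.injective_id.prodMap Fin.val_injective) fun p hp => ?_⟩
  exact ⟨(p.1, ⟨p.2, Nat.lt_succ_of_le (le_sup (f := Prod.snd) hp)⟩), rfl⟩

theorem field_satisfies_no_differential_identity_general
    (k : Type) [Field k] [CharZero k]
    (K : Type) [Field K] [Algebra k K] (D : Derivation k K K) (hD : D ≠ 0)
    (n : ℕ)
    (f : MvPolynomial (Fin n × ℕ) k) (hf : f ≠ 0) :
    ∃ v : Fin n → K, diffEval D v f ≠ 0 := by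
  have : CharZero K := charZero_of_injective_algebraMap (algebraMap k K).injective
  obtain ⟨t, ht⟩ : ∃ t, D t ≠ 0 := by
    by_contra! h
    exact hD (Derivation.ext h)
  obtain ⟨N, g, rfl⟩ := exists_rename_prodMap_fin_val f
  set W : Matrix (Fin N) (Fin N) K := Matrix.of fun j r : Fin N => (⇑D)^[j] (t ^ (r : ℕ))
  have hW : W.det ≠ 0 := by
    rw [det_iterate_derivation_pow]
    exact prod_ne_zero_iff.mpr fun j _ =>
      mul_ne_zero (pow_ne_zero _ ht) (Nat.cast_ne_zero.mpr j.val.factorial_ne_zero)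
  obtain ⟨c, hc⟩ := exists_aeval_mulVec_ne_zero hW (ne_zero_of_map hf)
  refine ⟨fun i => ∑ r : Fin N, c (i, r) • t ^ (r : ℕ), ?_⟩
  have hderiv : (fun p : Fin n × ℕ => (⇑D)^[p.2] (∑ r : Fin N, c (p.1, r) • t ^ (r : ℕ))) ∘
      Prod.map id Fin.val = fun p => (W *ᵥ fun r => algebraMap k K (c (p.1, r))) p.2 := by
    funext ⟨i, j⟩
    rw [Function.comp_apply, Prod.map_fst, Prod.map_snd, id_eq, iterate_derivation_sum_smul]
    simp only [W, mulVec, dotProduct, of_apply, Algebra.smul_def, mul_comm]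
  rw [diffEval, aeval_rename, hderiv]
  exact hc

/-- A field extension `K` of a field `k` of characteristic zero equipped with a nonzero
`k`-linear derivation satisfies no nontrivial differential identity. -/
theorem field_satisfies_no_differential_identity
    (k : Type) [Field k] [CharZero k]
    (K : Type) [Field K] [Algebra k K] (D : Derivation k K K) (hD : D ≠ 0)
    (n : ℕ) (hn : 1 ≤ n)
    (f : MvPolynomial (Fin n × ℕ) k) (hf : f ≠ 0) :
    ∃ v : Fin n → K, diffEval D v f ≠ 0 :=
  field_satisfies_no_differential_identity_general k K D hD n f hf
end

section
/- Let k be a field of characteristic zero and work in R = MvPolynomial (ℕ × ℕ) k with the derivation d determined by d (X (i, j)) = X (i, j+1) and the Novikov product a ∘ b := a * d b. Let W ⊆ R be the smallest k-submodule containing all variables X (i, 0) and closed under ∘ (its elements are the Novikov elements). Let k₀ ≥ 1 and let f ∈ R be nonzero and multilinear in the generators 0, …, k₀−1 (a k-linear combination of monomials ∏_{i < k₀} X (i, j i), each generator i < k₀ occurring exactly once and no other generator occurring). Let V be the smallest k-submodule of R containing f and closed under the operations v ↦ v ∘ g and v ↦ g ∘ v for every g ∈ W, and v ↦ φ_g v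 for every g : ℕ → W, where φ_g is the algebra endomorphism of R with φ_g (X (i, j)) = d^[j] (g i). Then there exist p, q ≥ 1 such that the monomial X (0, 2) * ⋯ * X (p−1, 2) * X (p, 0) * ⋯ * X (p+q−1, 0) belongs to V. -/
open MvPolynomial

/-- The derivation `d` of the free differential commutative algebra
`MvPolynomial (ℕ × ℕ) k` with `d (X (i, j)) = X (i, j + 1)`. -/
noncomputable def dNov (k : Type) [Field k] :
    Derivation k (MvPolynomial (ℕ × ℕ) k) (MvPolynomial (ℕ × ℕ) k) :=
  MvPolynomial.mkDerivation k (fun p : ℕ × ℕ => MvPolynomial.X (p.1, p.2 + 1))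

/-- The smallest `k`-submodule of `MvPolynomial (ℕ × ℕ) k` containing all the variables
`X (i, 0)` and closed under the Novikov product `a ∘ b = a * d b`: the space of Novikov
elements. -/
noncomputable def novikovSpan (k : Type) [Field k] : Submodule k (MvPolynomial (ℕ × ℕ) k) :=
  sInf {W : Submodule k (MvPolynomial (ℕ × ℕ) k) |
    (∀ i : ℕ, MvPolynomial.X (i, 0) ∈ W) ∧
    ∀ a ∈ W, ∀ b ∈ W, a * dNov k b ∈ W}

/-- The smallest `k`-submodule of `MvPolynomial (ℕ × ℕ) k` containing `f`, closed under
right and left Novikov multiplications by Novikov elements, and closed under Novikov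
substitutions: the infinitesimal `Nov`-bimodule generated by `f`. -/
noncomputable def novBimodule (k : Type) [Field k] (f : MvPolynomial (ℕ × ℕ) k) :
    Submodule k (MvPolynomial (ℕ × ℕ) k) :=
  sInf {V : Submodule k (MvPolynomial (ℕ × ℕ) k) |
    f ∈ V ∧
    (∀ v ∈ V, ∀ g ∈ novikovSpan k, v * dNov k g ∈ V ∧ g * dNov k v ∈ V) ∧
    (∀ v ∈ V, ∀ g : ℕ → MvPolynomial (ℕ × ℕ) k, (∀ i, g i ∈ novikovSpan k) →
      MvPolynomial.aeval (fun p : ℕ × ℕ => (⇑(dNov k))^[p.2] (g p.1)) v ∈ V)}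

/-!
Write `f = ∑ co J • ∏ t, X (t, J t)` and let `L` be the lexicographically largest `J` with
`co J ≠ 0`. For a generator `i` and a fresh variable `c`, the difference `Δ` between the Novikov
substitution `X (i, 0) ↦ X (i, 0) ∘ X (c, 0)` and right multiplication by `X (c, 1)` preserves the
bimodule, and by the Leibniz rule it lowers the order of `X (i, ·)` like a discrete derivative:
`Δ X (i, 0) = 0` and `Δ X (i, s + 1) = ∑_{a + b = s} (s+1 choose a) X (c, b + 2) X (i, a)`.
So `n` such differences, with fresh variables `c₀, …, cₙ₋₁`, kill `X (i, s)` for `s < n` and send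
`X (i, n)` to `n! • X (i, 0) ∏ᵣ X (cᵣ, 2)`. Doing this at every generator `t` with `n = L t` kills
every monomial but the one of `L`, since each other `J` is below `L` in some coordinate, and leaves
a nonzero multiple of `∏ₜ X (t, 0) ∏ᵣ X (c_{t,r}, 2)` (characteristic zero). Shifting the
generators to `p, p + 1, …` beforehand, the fresh variables can be `0, …, p - 2`; a last factor
`X (p + k₀, 0) X (p - 1, 2)` guarantees `p ≥ 1`.
-/

open Finset

theorem Derivation.iterate_leibniz {R A : Type*} [CommSemiring R] [CommSemiring A] [Algebra R A]
    (D : Derivation R A A) (n : ℕ) (a b : A) :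
    D^[n] (a * b) = ∑ ij ∈ antidiagonal n, n.choose ij.1 • (D^[ij.1] a * D^[ij.2] b) := by
  induction n with
  | zero => simp
  | succ n ih =>
    rw [sum_antidiagonal_choose_succ_nsmul (M := A) (fun i j => D^[i] a * D^[j] b) n]
    simp only [Function.iterate_succ_apply', ih, map_sum, map_nsmul, Derivation.leibniz,
      smul_eq_mul, smul_add, sum_add_distrib]
    congr 1
    refine sum_congr rfl fun ⟨i, j⟩ hij => ?_
    rw [n.choose_symm_of_eq_add (mem_antidiagonal.1 hij).symm]
    ring

variable {k : Type} [Field k]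

local notation "𝒜" => MvPolynomial (ℕ × ℕ) k

theorem dNov_X (i j : ℕ) : dNov k (X (i, j)) = X (i, j + 1) :=
  mkDerivation_X k _ (i, j)

theorem dNov_iterate_X (i j s : ℕ) : (dNov k)^[s] (X (i, j)) = X (i, j + s) := by
  induction s with
  | zero => rfl
  | succ s ih => rw [Function.iterate_succ_apply', ih, dNov_X, add_assoc]

theorem X_mem_novikovSpan (i : ℕ) : (X (i, 0) : 𝒜) ∈ novikovSpan k :=
  Submodule.mem_sInf.2 fun _ hW => hW.1 i

theorem mul_dNov_mem_novikovSpan {a b : 𝒜} (ha : a ∈ novikovSpan k) (hb : b ∈ novikovSpan k) :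
    a * dNov k b ∈ novikovSpan k :=
  Submodule.mem_sInf.2 fun W hW =>
    hW.2 a (Submodule.mem_sInf.1 ha W hW) b (Submodule.mem_sInf.1 hb W hW)

variable (k) in
noncomputable def novSubst (g : ℕ → 𝒜) : 𝒜 →ₐ[k] 𝒜 :=
  aeval fun p => (dNov k)^[p.2] (g p.1)

theorem novSubst_X (g : ℕ → 𝒜) (i j : ℕ) : novSubst k g (X (i, j)) = (dNov k)^[j] (g i) :=
  aeval_X _ _

section novBimodule

variable {f v : MvPolynomial (ℕ × ℕ) k}

theorem self_mem_novBimodule : f ∈ novBimodule k f :=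
  Submodule.mem_sInf.2 fun _ hV => hV.1

theorem mul_dNov_mem_novBimodule (hv : v ∈ novBimodule k f) {g : 𝒜} (hg : g ∈ novikovSpan k) :
    v * dNov k g ∈ novBimodule k f :=
  Submodule.mem_sInf.2 fun V hV => (hV.2.1 v (Submodule.mem_sInf.1 hv V hV) g hg).1

theorem novSubst_mem_novBimodule (hv : v ∈ novBimodule k f) {g : ℕ → 𝒜}
    (hg : ∀ i, g i ∈ novikovSpan k) : novSubst k g v ∈ novBimodule k f :=
  Submodule.mem_sInf.2 fun V hV => hV.2.2 v (Submodule.mem_sInf.1 hv V hV) g hg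

theorem mul_X_mem_novBimodule (hv : v ∈ novBimodule k f) (a : ℕ) :
    v * X (a, 1) ∈ novBimodule k f := by
  simpa only [dNov_X] using mul_dNov_mem_novBimodule hv (X_mem_novikovSpan a)

theorem mul_X_mul_X_two_mem_novBimodule (hv : v ∈ novBimodule k f) (a b : ℕ) :
    v * (X (a, 0) * X (b, 2)) ∈ novBimodule k f := by
  have h : v * (X (a, 0) * X (b, 2)) =
      v * dNov k (X (a, 0) * dNov k (X (b, 0))) - v * X (a, 1) * X (b, 1) := by
    simp only [dNov_X, Derivation.leibniz, smul_eq_mul]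
    ring
  rw [h]
  exact sub_mem (mul_dNov_mem_novBimodule hv <| mul_dNov_mem_novikovSpan (X_mem_novikovSpan a)
    (X_mem_novikovSpan b)) (mul_X_mem_novBimodule (mul_X_mem_novBimodule hv a) b)

end novBimodule

section difference

variable (i c : ℕ)

noncomputable def novAttach : 𝒜 →ₐ[k] 𝒜 :=
  novSubst k (Function.update (fun v => X (v, 0)) i (X (i, 0) * X (c, 1)))

theorem novAttach_X_of_ne {v : ℕ} (hv : v ≠ i) (j : ℕ) :
    novAttach i c (X (v, j) : 𝒜) = X (v, j) := by
  rw [novAttach, novSubst_X, Function.update_of_ne hv, dNov_iterate_X, zero_add]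

theorem novAttach_X_self (j : ℕ) :
    novAttach i c (X (i, j) : 𝒜) =
      ∑ ab ∈ antidiagonal j, j.choose ab.1 • (X (i, ab.1) * X (c, ab.2 + 1)) := by
  simp only [novAttach, novSubst_X, Function.update_self, Derivation.iterate_leibniz,
    dNov_iterate_X, zero_add, add_comm 1]

variable {i} in
theorem novAttach_eq_self {x : 𝒜} (hx : x ∈ supported k {p | p.1 ≠ i}) :
    novAttach i c x = x := by
  refine hom_congr_vars (f₂ := RingHom.id 𝒜) ?_ (fun p hp _ => ?_) rfl
  · ext; simp
  · exact novAttach_X_of_ne i c (mem_supported.1 hx hp) p.2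

noncomputable def novDiff : Module.End k 𝒜 :=
  (novAttach i c).toLinearMap - LinearMap.mulRight k (X (c, 1))

theorem novDiff_apply (x : 𝒜) : novDiff i c x = novAttach i c x - x * X (c, 1) := rfl

variable {i} in
theorem novDiff_mul {x : 𝒜} (hx : x ∈ supported k {p | p.1 ≠ i}) (y : 𝒜) :
    novDiff i c (x * y) = x * novDiff i c y := by
  rw [novDiff_apply, novDiff_apply, map_mul, novAttach_eq_self c hx]
  ring

theorem novDiff_X_zero : novDiff i c (X (i, 0) : 𝒜) = 0 := by
  rw [novDiff_apply, novAttach_X_self]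
  simp

theorem novDiff_X_succ (m : ℕ) :
    novDiff i c (X (i, m + 1) : 𝒜) =
      ∑ ab ∈ antidiagonal m, (m + 1).choose ab.1 • (X (c, ab.2 + 2) * X (i, ab.1)) := by
  rw [novDiff_apply, novAttach_X_self, Nat.sum_antidiagonal_succ']
  simp only [Nat.choose_self, one_smul, add_sub_cancel_left]
  exact sum_congr rfl fun ab _ => by rw [mul_comm, add_assoc]

theorem novDiff_mem {f v : MvPolynomial (ℕ × ℕ) k} (hv : v ∈ novBimodule k f) :
    novDiff i c v ∈ novBimodule k f := by
  refine sub_mem (novSubst_mem_novBimodule hv fun v => ?_) (mul_X_mem_novBimodule hv c)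
  rcases eq_or_ne v i with rfl | hv
  · simpa [dNov_X] using mul_dNov_mem_novikovSpan (X_mem_novikovSpan v) (X_mem_novikovSpan c)
  · simpa [Function.update_of_ne hv] using X_mem_novikovSpan v

end difference

section iteratedDifference

variable (i : ℕ) (c : ℕ → ℕ)

noncomputable def novDiffIter : ℕ → Module.End k 𝒜
  | 0 => 1
  | n + 1 => novDiffIter n * novDiff i (c n)

theorem novDiffIter_succ_apply (n : ℕ) (x : 𝒜) :
    novDiffIter i c (n + 1) x = novDiffIter i c n (novDiff i (c n) x) := rfl

theorem novDiffIter_mem {f v : MvPolynomial (ℕ × ℕ) k} (hv : v ∈ novBimodule k f) (n : ℕ) :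
    novDiffIter i c n v ∈ novBimodule k f := by
  induction n generalizing v with
  | zero => exact hv
  | succ n ih => exact ih (novDiff_mem i (c n) hv)

variable {i} in
theorem novDiffIter_mul {x : 𝒜} (hx : x ∈ supported k {p | p.1 ≠ i}) (n : ℕ) (y : 𝒜) :
    novDiffIter i c n (x * y) = x * novDiffIter i c n y := by
  induction n generalizing y with
  | zero => rfl
  | succ n ih => rw [novDiffIter_succ_apply, novDiff_mul _ hx, ih, novDiffIter_succ_apply]

variable {i c}

theorem novDiffIter_succ_X_succ (hc : ∀ r, c r ≠ i) (n m : ℕ) :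
    novDiffIter i c (n + 1) (X (i, m + 1) : 𝒜) =
      ∑ ab ∈ antidiagonal m,
        (m + 1).choose ab.1 • (X (c n, ab.2 + 2) * novDiffIter i c n (X (i, ab.1))) := by
  rw [novDiffIter_succ_apply, novDiff_X_succ, map_sum]
  refine sum_congr rfl fun ab _ => ?_
  rw [map_nsmul, novDiffIter_mul c ((X_mem_supported (R := k)).2 (hc n))]

theorem novDiffIter_X_of_lt (hc : ∀ r, c r ≠ i) {n s : ℕ} (hs : s < n) :
    novDiffIter i c n (X (i, s) : 𝒜) = 0 := by
  induction n generalizing s with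
  | zero => omega
  | succ n ih =>
    cases s with
    | zero => rw [novDiffIter_succ_apply, novDiff_X_zero, map_zero]
    | succ m =>
      rw [novDiffIter_succ_X_succ hc]
      refine sum_eq_zero fun ab hab => ?_
      have : ab.1 < n := by have := HasAntidiagonal.mem_antidiagonal.1 hab; omega
      rw [ih this, mul_zero, smul_zero]

theorem novDiffIter_X_self (hc : ∀ r, c r ≠ i) (n : ℕ) :
    novDiffIter i c n (X (i, n) : 𝒜) =
      (n.factorial : k) • (X (i, 0) * ∏ r ∈ range n, X (c r, 2)) := by
  induction n with
  | zero => simp [novDiffIter]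
  | succ n ih =>
    rw [novDiffIter_succ_X_succ hc, sum_eq_single (n, 0)]
    · rw [ih, Nat.choose_succ_self_right, prod_range_succ, Nat.factorial_succ, Nat.cast_mul,
        mul_smul, ← Nat.cast_smul_eq_nsmul k, mul_smul_comm]
      simp only [zero_add]
      congr 2
      ring
    · rintro ⟨a, b⟩ hab hne
      have := HasAntidiagonal.mem_antidiagonal.1 hab
      simp only [ne_eq, Prod.mk.injEq] at hne this
      rw [novDiffIter_X_of_lt hc (by omega), mul_zero, smul_zero]
    · simp

theorem novDiffIter_X_mem_supported (hc : ∀ r, c r ≠ i) {t : ℕ} (hi : i ≠ t)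
    (hct : ∀ r, c r ≠ t) (n s : ℕ) :
    novDiffIter i c n (X (i, s) : 𝒜) ∈ supported k {p | p.1 ≠ t} := by
  induction n generalizing s with
  | zero => exact (X_mem_supported (R := k)).2 hi
  | succ n ih =>
    cases s with
    | zero => rw [novDiffIter_succ_apply, novDiff_X_zero, map_zero]; exact zero_mem _
    | succ m =>
      rw [novDiffIter_succ_X_succ hc]
      exact sum_mem fun ab _ =>
        nsmul_mem (mul_mem ((X_mem_supported (R := k)).2 (hct n)) (ih _)) _

end iteratedDifference

section leadingMonomial

variable {ι : Type*} [Fintype ι] [DecidableEq ι] {gen : ι → ℕ} {c : ι → ℕ → ℕ}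

theorem novDiffIter_prod_ite (hgen : Function.Injective gen) (hc : ∀ t r s, c t r ≠ gen s)
    (n : ι → ℕ) (J : ι → ℕ) {T : Finset ι} {a : ι} (ha : a ∉ T) :
    novDiffIter (gen a) (c a) (n a)
      (∏ t, if t ∈ T then novDiffIter (gen t) (c t) (n t) (X (gen t, J t))
        else (X (gen t, J t) : 𝒜)) =
    ∏ t, if t ∈ insert a T then novDiffIter (gen t) (c t) (n t) (X (gen t, J t))
      else (X (gen t, J t) : 𝒜) := by
  rw [← mul_prod_erase _ _ (mem_univ a), ← mul_prod_erase _ _ (mem_univ a), if_neg ha,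
    if_pos (mem_insert_self a T), mul_comm, novDiffIter_mul, mul_comm]
  · refine congrArg _ (prod_congr rfl fun t ht => ?_)
    simp only [mem_insert, ne_of_mem_erase ht, false_or]
  · refine prod_mem fun t ht => ?_
    have hta : gen t ≠ gen a := hgen.ne (ne_of_mem_erase ht)
    split_ifs
    · exact novDiffIter_X_mem_supported (hc t · t) hta (hc t · a) _ _
    · exact (X_mem_supported (R := k)).2 hta

theorem sum_prod_novDiffIter_mem (hgen : Function.Injective gen) (hc : ∀ t r s, c t r ≠ gen s)
    (n : ι → ℕ) {f : MvPolynomial (ℕ × ℕ) k} {B : Finset (ι → ℕ)} {co : (ι → ℕ) → k}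
    (hB : ∑ J ∈ B, co J • ∏ t, (X (gen t, J t) : 𝒜) ∈ novBimodule k f) (T : Finset ι) :
    ∑ J ∈ B, co J • ∏ t, (if t ∈ T then novDiffIter (gen t) (c t) (n t) (X (gen t, J t))
      else (X (gen t, J t) : 𝒜)) ∈ novBimodule k f := by
  induction T using Finset.induction_on with
  | empty => simpa using hB
  | insert a T ha ih =>
    simpa only [map_sum, map_smul, novDiffIter_prod_ite hgen hc n _ ha] using
      novDiffIter_mem (gen a) (c a) ih (n a)

theorem leading_monomial_mem_novBimodule [CharZero k] (hgen : Function.Injective gen)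
    (hc : ∀ t r s, c t r ≠ gen s) {f : MvPolynomial (ℕ × ℕ) k} {B : Finset (ι → ℕ)}
    {co : (ι → ℕ) → k} (hB : ∑ J ∈ B, co J • ∏ t, (X (gen t, J t) : 𝒜) ∈ novBimodule k f)
    {L : ι → ℕ} (hL : L ∈ B) (hco : co L ≠ 0) (hmax : ∀ J ∈ B, J ≠ L → ∃ t, J t < L t) :
    ∏ t, (X (gen t, 0) * ∏ r ∈ range (L t), X (c t r, 2)) ∈ novBimodule k f := by
  have hall := sum_prod_novDiffIter_mem hgen hc L hB univ
  simp only [mem_univ, if_true] at hall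
  rw [sum_eq_single L] at hall
  · simp only [novDiffIter_X_self (hc _ · _), prod_smul, smul_smul] at hall
    refine (Submodule.smul_mem_iff _ ?_).1 hall
    exact mul_ne_zero hco (prod_ne_zero_iff.2 fun t _ =>
      Nat.cast_ne_zero.2 (Nat.factorial_ne_zero _))
  · intro J hJ hne
    obtain ⟨t, ht⟩ := hmax J hJ hne
    rw [prod_eq_zero (mem_univ t) (novDiffIter_X_of_lt (hc t · t) ht), smul_zero]
  · exact fun h => absurd hL h

end leadingMonomial

theorem prod_range_finSigmaFinEquiv {M : Type*} [CommMonoid M] {m : ℕ} (L : Fin m → ℕ)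
    (g : ℕ → M) :
    ∏ t, ∏ r ∈ range (L t), g (if h : r < L t then finSigmaFinEquiv ⟨t, ⟨r, h⟩⟩ else 0) =
      ∏ j : Fin (∑ t, L t), g j := by
  simp only [prod_range, Fin.is_lt, dif_pos, Fin.eta]
  rw [← Fintype.prod_sigma' (fun t (r : Fin (L t)) => g (finSigmaFinEquiv ⟨t, r⟩)),
    Equiv.prod_comp finSigmaFinEquiv (fun j => g j)]

theorem exists_lt_of_toLex_le_of_ne {ι β : Type*} [LinearOrder ι] [PartialOrder β] {J L : ι → β}
    (hle : toLex J ≤ toLex L) (hne : J ≠ L) : ∃ t, J t < L t := by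
  obtain ⟨t, -, ht⟩ := lt_of_le_of_ne hle (toLex.injective.ne hne)
  exact ⟨t, ht⟩

theorem novBimodule_contains_special_monomial_general
    (k : Type) [Field k] [CharZero k]
    (k₀ : ℕ)
    (f : MvPolynomial (ℕ × ℕ) k) (hf : f ≠ 0)
    (hml : f ∈ Submodule.span k
      {m : MvPolynomial (ℕ × ℕ) k |
        ∃ j : Fin k₀ → ℕ, m = ∏ i : Fin k₀, MvPolynomial.X ((i : ℕ), j i)}) :
    ∃ p q : ℕ, 1 ≤ p ∧ 1 ≤ q ∧
      (∏ i : Fin p, MvPolynomial.X ((i : ℕ), 2)) *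
        (∏ i : Fin q, MvPolynomial.X ((p + (i : ℕ), 0) : ℕ × ℕ)) ∈ novBimodule k f := by
  obtain ⟨co, hco⟩ := Finsupp.mem_span_range_iff_exists_finsupp.1 <| by
    simpa only [Set.range, eq_comm] using hml
  obtain ⟨L, hL, hLmax⟩ := co.support.exists_max_image toLex
    (Finsupp.support_nonempty_iff.2 fun h => hf (by simp [← hco, h]))
  set N := ∑ t, L t
  set p := N + 1
  have hshift : ∑ J ∈ co.support, co J • ∏ t : Fin k₀, (X (p + t, J t) : MvPolynomial (ℕ × ℕ) k)
      ∈ novBimodule k f := by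
    convert novSubst_mem_novBimodule (g := fun v => X (p + v, 0)) self_mem_novBimodule
      fun v => X_mem_novikovSpan (p + v) using 1
    simp only [← hco, Finsupp.sum, map_sum, map_smul, map_prod, novSubst_X, dNov_iterate_X,
      zero_add]
  -- the fresh variables `c t r` for `r < L t` enumerate `0, …, N - 1`; other values are unused
  have hlead := leading_monomial_mem_novBimodule (gen := fun t : Fin k₀ => p + t)
    (c := fun t r => if h : r < L t then finSigmaFinEquiv ⟨t, ⟨r, h⟩⟩ else 0)
    (fun a b h => Fin.ext (by simpa using h)) (fun t r s => by split_ifs <;> omega) hshift hL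
    (Finsupp.mem_support_iff.1 hL) fun J hJ hne => exists_lt_of_toLex_le_of_ne (hLmax J hJ) hne
  refine ⟨p, k₀ + 1, by omega, by omega, ?_⟩
  convert mul_X_mul_X_two_mem_novBimodule hlead (p + k₀) N using 1
  rw [prod_mul_distrib, prod_range_finSigmaFinEquiv L (fun j => X (j, 2)),
    Fin.prod_univ_castSucc, Fin.prod_univ_castSucc]
  simp only [Fin.val_castSucc, Fin.val_last]
  ring

/-- For a nonzero multilinear differential polynomial `f`, the infinitesimal
`Nov`-bimodule of the free differential commutative algebra generated by `f` contains a
monomial `X (0,2) ⋯ X (p-1,2) · X (p,0) ⋯ X (p+q-1,0)`. -/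
theorem novBimodule_contains_special_monomial
    (k : Type) [Field k] [CharZero k]
    (k₀ : ℕ) (hk₀ : 1 ≤ k₀)
    (f : MvPolynomial (ℕ × ℕ) k) (hf : f ≠ 0)
    (hml : f ∈ Submodule.span k
      {m : MvPolynomial (ℕ × ℕ) k |
        ∃ j : Fin k₀ → ℕ, m = ∏ i : Fin k₀, MvPolynomial.X ((i : ℕ), j i)}) :
    ∃ p q : ℕ, 1 ≤ p ∧ 1 ≤ q ∧
      (∏ i : Fin p, MvPolynomial.X ((i : ℕ), 2)) *
        (∏ i : Fin q, MvPolynomial.X ((p + (i : ℕ), 0) : ℕ × ℕ)) ∈ novBimodule k f :=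
  novBimodule_contains_special_monomial_general k k₀ f hf hml
end
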